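/- Let U ∈ ℝ^{T×(2n−1)p}, β ∈ ℝ^{(2n−1)p}, ξ ∈ ℝ^T, y = Uβ + ξ, and λ > 0. If β̂ is a minimizer of β′ ↦ (1/2)‖Uβ′ − y‖₂² + λ‖G(β′)‖_*, then ‖G(β̂)‖_* − ‖G(β)‖_* ≤ (‖G(Uᵀξ)‖/λ) · ‖G(β̂ − β)‖_*. -/

import Mathlib

open MeasureTheory ProbabilityTheory Matrix

noncomputable section

def eNorm {ι : Type*} [Fintype ι] (x : ι → ℝ) : ℝ := Real.sqrt (∑ i, x i ^ 2)

def eInner {ι : Type*} [Fintype ι] (x y : ι → ℝ) : ℝ := ∑ i, x i * y i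

def frobNorm {m n : Type*} [Fintype m] [Fintype n] (A : Matrix m n ℝ) : ℝ :=
  Real.sqrt (∑ i, ∑ j, A i j ^ 2)

def frobInner {m n : Type*} [Fintype m] [Fintype n] (A B : Matrix m n ℝ) : ℝ :=
  ∑ i, ∑ j, A i j * B i j

def specNorm {m n : Type*} [Fintype m] [Fintype n] (A : Matrix m n ℝ) : ℝ :=
  sSup {c | ∃ x : n → ℝ, eNorm x ≤ 1 ∧ c = eNorm (A.mulVec x)}

def nucNorm {m n : Type*} [Fintype m] [Fintype n] [DecidableEq n] (A : Matrix m n ℝ) : ℝ :=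
  ∑ i, Real.sqrt ((show (Aᵀ * A).IsHermitian by
    simpa using Matrix.isHermitian_conjTranspose_mul_self A).eigenvalues i)

def hankel {n : ℕ} (v : Fin (2*n-1) → ℝ) : Matrix (Fin n) (Fin n) ℝ :=
  Matrix.of fun j k => v ⟨(j:ℕ) + k, by omega⟩

def Kw (n : ℕ) (j : Fin (2*n-1)) : ℝ :=
  if (j:ℕ) + 1 ≤ n then Real.sqrt ((j:ℕ) + 1) else Real.sqrt (2*n - ((j:ℕ)+1))

def wHankel {n p : ℕ} (β : Fin (2*n-1) × Fin p → ℝ) : Matrix (Fin n) (Fin n × Fin p) ℝ :=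
  Matrix.of fun j kl => β (⟨(j:ℕ) + kl.1, by omega⟩, kl.2) / Kw n ⟨(j:ℕ) + kl.1, by omega⟩

def blockHankel {n p : ℕ} (h : Fin (2*n-1) × Fin p → ℝ) : Matrix (Fin n) (Fin n × Fin p) ℝ :=
  Matrix.of fun j kl => h (⟨(j:ℕ) + kl.1, by omega⟩, kl.2)

def stdGaussian (ι : Type*) [Fintype ι] : Measure (ι → ℝ) :=
  Measure.pi fun _ => gaussianReal 0 1

def gaussWidth {ι : Type*} [Fintype ι] (S : Set (ι → ℝ)) : ℝ :=
  ∫ g, sSup ((fun γ => eInner γ g) '' S) ∂ stdGaussian ι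


/-!
Comparing the objective at `β̂` and at `β` and expanding the squares gives the basic inequality
`λ (‖G β̂‖_* - ‖G β‖_*) ≤ ⟨β̂ - β, Uᵀξ⟩`. Since `K_s²` is the number of entries on the `s`-th
antidiagonal of an `n × n` matrix, `G` preserves inner products, so the right side equals the
Frobenius pairing `⟨G(Uᵀξ), G(β̂ - β)⟩`, and trace duality `⟨A, B⟩ ≤ ‖A‖ ‖B‖_*` bounds it. The
duality follows by expanding the pairing in an orthonormal eigenbasis `vⱼ` of `BᵀB`, in which
`‖B vⱼ‖` are the singular values of `B`.
-/

section Euclidean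

variable {ι : Type*} [Fintype ι]

lemma eNorm_eq_sqrt_dotProduct (x : ι → ℝ) : eNorm x = √(x ⬝ᵥ x) := by
  simp only [eNorm, dotProduct, sq]

lemma eNorm_sq (x : ι → ℝ) : eNorm x ^ 2 = x ⬝ᵥ x := by
  rw [eNorm, Real.sq_sqrt (by positivity)]
  simp only [dotProduct, sq]

lemma eNorm_ofLp (x : EuclideanSpace ℝ ι) : eNorm x = ‖x‖ := by
  simp only [eNorm, EuclideanSpace.norm_eq, Real.norm_eq_abs, sq_abs]

lemma eInner_comm (x y : ι → ℝ) : eInner x y = eInner y x := by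
  simp only [eInner, mul_comm]

lemma eInner_le_eNorm_mul_eNorm (x y : ι → ℝ) : eInner x y ≤ eNorm x * eNorm y :=
  Real.sum_mul_le_sqrt_mul_sqrt _ x y

end Euclidean

section SpecNorm

variable {m n : Type*} [Fintype m] [Fintype n]

lemma eNorm_mulVec_le_frobNorm_mul (A : Matrix m n ℝ) (x : n → ℝ) :
    eNorm (A *ᵥ x) ≤ frobNorm A * eNorm x := by
  rw [frobNorm, eNorm, eNorm, ← Real.sqrt_mul (by positivity), Finset.sum_mul]
  gcongr with i
  exact Finset.sum_mul_sq_le_sq_mul_sq _ (A i) x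

lemma bddAbove_specNorm_set (A : Matrix m n ℝ) :
    BddAbove {c | ∃ x : n → ℝ, eNorm x ≤ 1 ∧ c = eNorm (A *ᵥ x)} := by
  refine ⟨frobNorm A, ?_⟩
  rintro c ⟨x, hx, rfl⟩
  calc eNorm (A *ᵥ x) ≤ frobNorm A * eNorm x := eNorm_mulVec_le_frobNorm_mul A x
    _ ≤ frobNorm A := mul_le_of_le_one_right (Real.sqrt_nonneg _) hx

lemma eNorm_mulVec_le_specNorm (A : Matrix m n ℝ) {x : n → ℝ} (hx : eNorm x ≤ 1) :
    eNorm (A *ᵥ x) ≤ specNorm A :=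
  le_csSup (bddAbove_specNorm_set A) ⟨x, hx, rfl⟩

end SpecNorm

section TraceDuality

variable {m n ι : Type*} [Fintype m] [Fintype n] [Fintype ι]

lemma frobInner_eq_sum_eInner_mulVec (A B : Matrix m n ℝ)
    (v : OrthonormalBasis ι ℝ (EuclideanSpace ℝ n)) :
    frobInner A B = ∑ j, eInner (A *ᵥ v j) (B *ᵥ v j) := by
  have parseval : ∀ i, ∑ k, A i k * B i k = ∑ j, (A *ᵥ v j) i * (B *ᵥ v j) i := by
    intro i
    have := v.sum_inner_mul_inner (WithLp.toLp 2 (A i)) (WithLp.toLp 2 (B i))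
    simp only [EuclideanSpace.inner_eq_star_dotProduct, star_trivial] at this
    simpa [mulVec, dotProduct_comm, dotProduct, mul_comm] using this.symm
  simp only [frobInner, eInner, parseval]
  exact Finset.sum_comm

variable [DecidableEq n]

lemma eNorm_mulVec_eigenvectorBasis (B : Matrix m n ℝ) (hB : (Bᵀ * B).IsHermitian) (j : n) :
    eNorm (B *ᵥ hB.eigenvectorBasis j) = √(hB.eigenvalues j) := by
  set v := hB.eigenvectorBasis j
  have hv : (v : n → ℝ) ⬝ᵥ v = 1 := by
    have := hB.eigenvectorBasis.orthonormal.1 j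
    rwa [← eNorm_ofLp, eNorm_eq_sqrt_dotProduct, Real.sqrt_eq_one] at this
  rw [eNorm_eq_sqrt_dotProduct, dotProduct_mulVec, ← mulVec_transpose, mulVec_mulVec,
    dotProduct_comm, hB.mulVec_eigenvectorBasis j, dotProduct_smul, hv, smul_eq_mul, mul_one]

lemma frobInner_le_specNorm_mul_nucNorm (A B : Matrix m n ℝ) :
    frobInner A B ≤ specNorm A * nucNorm B := by
  have hB : (Bᵀ * B).IsHermitian := by simpa using isHermitian_conjTranspose_mul_self B
  let v := hB.eigenvectorBasis
  have hv : ∀ j, eNorm (v j : n → ℝ) = 1 := fun j => by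
    rw [eNorm_ofLp]; exact v.orthonormal.1 j
  calc frobInner A B = ∑ j, eInner (A *ᵥ v j) (B *ᵥ v j) := frobInner_eq_sum_eInner_mulVec A B v
    _ ≤ ∑ j, specNorm A * √(hB.eigenvalues j) := by
      gcongr with j
      refine (eInner_le_eNorm_mul_eNorm _ _).trans ?_
      rw [eNorm_mulVec_eigenvectorBasis]
      gcongr
      exact eNorm_mulVec_le_specNorm A (hv j).le
    _ = specNorm A * nucNorm B := by rw [← Finset.mul_sum]; rfl

end TraceDuality

section HankelIsometry

open Finset

def antidiagCard (n : ℕ) (s : Fin (2*n-1)) : ℕ := #{jk : Fin n × Fin n | (jk.1 : ℕ) + jk.2 = s}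

variable {n : ℕ}

lemma antidiagCard_eq (s : Fin (2*n-1)) :
    antidiagCard n s = if (s : ℕ) + 1 ≤ n then (s : ℕ) + 1 else 2*n - 1 - s := by
  have hs := s.2
  have hfst : antidiagCard n s = #(Icc ((s : ℕ) + 1 - n) (min s (n-1))) := by
    refine card_bij (fun jk _ => (jk.1 : ℕ)) ?_ ?_ ?_
    · rintro ⟨j, k⟩ hjk
      simp only [mem_filter, mem_univ, true_and] at hjk
      simp only [mem_Icc, le_min_iff]
      omega
    · rintro ⟨j₁, k₁⟩ h₁ ⟨j₂, k₂⟩ h₂ hj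
      simp only [mem_filter, mem_univ, true_and] at h₁ h₂
      simp only [Prod.mk.injEq, Fin.ext_iff] at hj ⊢
      omega
    · intro j hj
      simp only [mem_Icc, le_min_iff] at hj
      refine ⟨(⟨j, by omega⟩, ⟨s - j, by omega⟩), ?_, rfl⟩
      simp only [mem_filter, mem_univ, true_and]
      omega
  rw [hfst, Nat.card_Icc]
  split <;> omega

lemma Kw_sq_eq_antidiagCard (s : Fin (2*n-1)) :
    Kw n s ^ 2 = antidiagCard n s := by
  have hs := s.2
  rw [Kw, antidiagCard_eq]
  split
  · rw [Real.sq_sqrt (by positivity)]; push_cast; ring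
  · rw [Real.sq_sqrt (by rw [sub_nonneg]; exact_mod_cast (by omega : (s : ℕ) + 1 ≤ 2*n)),
      Nat.cast_sub (by omega), Nat.cast_sub (by omega)]
    push_cast; ring

lemma sum_sum_fin_add_eq_sum_antidiagCard_nsmul {M : Type*} [AddCommMonoid M]
    (f : Fin (2*n-1) → M) :
    ∑ j : Fin n, ∑ k : Fin n, f ⟨j + k, by omega⟩ = ∑ s, antidiagCard n s • f s := by
  rw [← Fintype.sum_prod_type' (f := fun (j k : Fin n) => f ⟨j + k, by omega⟩),
    ← sum_fiberwise' univ (fun jk : Fin n × Fin n => (⟨jk.1 + jk.2, by omega⟩ : Fin (2*n-1))) f]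
  simp only [antidiagCard, sum_const, Fin.ext_iff]

lemma frobInner_wHankel {p : ℕ} (a b : Fin (2*n-1) × Fin p → ℝ) :
    frobInner (wHankel a) (wHankel b) = eInner a b := by
  have hK : ∀ s : Fin (2*n-1), Kw n s ^ 2 ≠ 0 := fun s => by
    rw [Kw_sq_eq_antidiagCard, Nat.cast_ne_zero, ← Nat.pos_iff_ne_zero, antidiagCard_eq]
    split <;> omega
  calc frobInner (wHankel a) (wHankel b)
      = ∑ j : Fin n, ∑ k : Fin n, (fun s => (∑ l, a (s, l) * b (s, l)) / Kw n s ^ 2)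
          ⟨j + k, by omega⟩ := by
        simp only [frobInner, wHankel, of_apply, Fintype.sum_prod_type, sum_div,
          div_mul_div_comm, sq]
    _ = ∑ s, antidiagCard n s • ((∑ l, a (s, l) * b (s, l)) / Kw n s ^ 2) :=
        sum_sum_fin_add_eq_sum_antidiagCard_nsmul (fun s => (∑ l, a (s, l) * b (s, l)) / Kw n s ^ 2)
    _ = ∑ s, ∑ l, a (s, l) * b (s, l) := by
        refine sum_congr rfl fun s _ => ?_
        rw [nsmul_eq_mul, ← Kw_sq_eq_antidiagCard, mul_div_cancel₀ _ (hK s)]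
    _ = eInner a b := by rw [eInner, Fintype.sum_prod_type]

end HankelIsometry

lemma penalized_lsq_basic_inequality {m ι : Type*} [Fintype m] [Fintype ι] (U : Matrix m ι ℝ)
    (R : (ι → ℝ) → ℝ) (β βhat : ι → ℝ) (ξ : m → ℝ) (l : ℝ)
    (hmin : (1/2) * eNorm (U *ᵥ βhat - (U *ᵥ β + ξ)) ^ 2 + l * R βhat ≤
      (1/2) * eNorm (U *ᵥ β - (U *ᵥ β + ξ)) ^ 2 + l * R β) :
    l * (R βhat - R β) ≤ eInner (βhat - β) (Uᵀ *ᵥ ξ) := by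
  set δ := βhat - β
  have hfit : U *ᵥ βhat - (U *ᵥ β + ξ) = U *ᵥ δ - ξ := by
    rw [mulVec_sub]; abel
  have hnull : U *ᵥ β - (U *ᵥ β + ξ) = -ξ := by abel
  have hadj : ξ ⬝ᵥ (U *ᵥ δ) = eInner δ (Uᵀ *ᵥ ξ) := by
    rw [dotProduct_mulVec, ← mulVec_transpose, dotProduct_comm]; rfl
  rw [hfit, hnull, eNorm_sq, eNorm_sq] at hmin
  simp only [sub_dotProduct, dotProduct_sub, neg_dotProduct, dotProduct_neg, neg_neg,
    dotProduct_comm (U *ᵥ δ) ξ, hadj] at hmin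
  have hquad : 0 ≤ (U *ᵥ δ) ⬝ᵥ (U *ᵥ δ) := by
    simpa only [star_trivial] using dotProduct_self_star_nonneg (U *ᵥ δ)
  linarith

theorem stmt9_general (n p T : ℕ)
    (U : Matrix (Fin T) (Fin (2*n-1) × Fin p) ℝ)
    (β βhat : Fin (2*n-1) × Fin p → ℝ) (ξ : Fin T → ℝ) (l : ℝ) (hl : 0 < l)
    (hmin : ∀ β' : Fin (2*n-1) × Fin p → ℝ,
      (1/2) * eNorm (U *ᵥ βhat - (U *ᵥ β + ξ)) ^ 2 + l * nucNorm (wHankel βhat) ≤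
      (1/2) * eNorm (U *ᵥ β' - (U *ᵥ β + ξ)) ^ 2 + l * nucNorm (wHankel β')) :
    nucNorm (wHankel βhat) - nucNorm (wHankel β) ≤
      (specNorm (wHankel (Uᵀ *ᵥ ξ)) / l) * nucNorm (wHankel (βhat - β)) := by
  have hbasic := penalized_lsq_basic_inequality U (fun b => nucNorm (wHankel b)) β βhat ξ l (hmin β)
  have hdual : eInner (βhat - β) (Uᵀ *ᵥ ξ) ≤
      specNorm (wHankel (Uᵀ *ᵥ ξ)) * nucNorm (wHankel (βhat - β)) := by
    rw [eInner_comm, ← frobInner_wHankel]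
    exact frobInner_le_specNorm_mul_nucNorm _ _
  rw [div_mul_eq_mul_div, le_div_iff₀ hl]
  linarith

/-- If `β̂` minimizes the regularized objective `(1/2)‖Uβ' - y‖₂² + λ‖G(β')‖_*` with
`y = Uβ + ξ`, then `‖G(β̂)‖_* - ‖G(β)‖_* ≤ (‖G(Uᵀξ)‖/λ)·‖G(β̂ - β)‖_*`. -/
theorem stmt9 (n p T : ℕ) (hn : 1 ≤ n) (hp : 1 ≤ p)
    (U : Matrix (Fin T) (Fin (2*n-1) × Fin p) ℝ)
    (β βhat : Fin (2*n-1) × Fin p → ℝ) (ξ : Fin T → ℝ) (l : ℝ) (hl : 0 < l)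
    (hmin : ∀ β' : Fin (2*n-1) × Fin p → ℝ,
      (1/2) * eNorm (U *ᵥ βhat - (U *ᵥ β + ξ)) ^ 2 + l * nucNorm (wHankel βhat) ≤
      (1/2) * eNorm (U *ᵥ β' - (U *ᵥ β + ξ)) ^ 2 + l * nucNorm (wHankel β')) :
    nucNorm (wHankel βhat) - nucNorm (wHankel β) ≤
      (specNorm (wHankel (Uᵀ *ᵥ ξ)) / l) * nucNorm (wHankel (βhat - β)) :=
  stmt9_general n p T U β βhat ξ l hl hmin

end
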